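/- arXiv:quant-ph/0404180 — 3 statements merged into one kernel-verified Lean document; each statement's English description precedes it below -/
import Mathlib

section
/- Every real antisymmetric 2n×2n matrix M can be written as M = R · D · Rᵀ where R ∈ SO(2n) and D is block diagonal with n blocks of the form [[0, λ_j], [-λ_j, 0]] for real numbers λ_j. -/
open scoped BigOperators
open Matrix

/-- The block-diagonal `2n×2n` matrix with `n` blocks `[[0, λ_j], [-λ_j, 0]]`. -/
noncomputable def blockDiagAntisym {n : ℕ} (l : Fin n → ℝ) :
    Matrix (Fin (2*n)) (Fin (2*n)) ℝ :=
  Matrix.of fun i j =>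
    if i.val % 2 = 0 ∧ j.val = i.val + 1 then l ⟨i.val / 2, by have := i.isLt; omega⟩
    else if j.val % 2 = 0 ∧ i.val = j.val + 1 then -l ⟨j.val / 2, by have := j.isLt; omega⟩
    else 0

namespace AntisymAux

/-- The index equivalence splitting off the first two coordinates. -/
def finEquiv (n : ℕ) : Fin 2 ⊕ Fin (2*n) ≃ Fin (2*(n+1)) :=
  finSumFinEquiv.trans (finCongr (by ring))

lemma finEquiv_inl_val {n : ℕ} (a : Fin 2) : (finEquiv n (Sum.inl a)).val = a.val := rfl

lemma finEquiv_inr_val {n : ℕ} (k : Fin (2*n)) : (finEquiv n (Sum.inr k)).val = 2 + k.val := rfl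

/-- Prepend a value to a tuple. -/
def consFun {n : ℕ} (c : ℝ) (l : Fin n → ℝ) : Fin (n+1) → ℝ :=
  fun i => if h : i.val = 0 then c else l ⟨i.val - 1, by have := i.isLt; omega⟩

lemma blockDiag_cons {n : ℕ} (c : ℝ) (l : Fin n → ℝ) :
    blockDiagAntisym (consFun c l) =
      Matrix.reindex (finEquiv n) (finEquiv n)
        (Matrix.fromBlocks !![0, c; -c, 0] 0 0 (blockDiagAntisym l)) := by
  ext i j
  obtain ⟨a, rfl⟩ := (finEquiv n).surjective i
  obtain ⟨b, rfl⟩ := (finEquiv n).surjective j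
  rw [Matrix.reindex_apply, Matrix.submatrix_apply, Equiv.symm_apply_apply,
    Equiv.symm_apply_apply]
  rcases a with a | a <;> rcases b with b | b
  · fin_cases a <;> fin_cases b <;>
      simp [blockDiagAntisym, consFun, finEquiv, Matrix.fromBlocks]
  all_goals
  · simp only [blockDiagAntisym, consFun, Matrix.fromBlocks, Matrix.of_apply, Sum.elim_inl,
      Sum.elim_inr, Matrix.zero_apply]
    split_ifs <;> (try simp only [finEquiv_inl_val, finEquiv_inr_val] at *) <;>
      first
        | rfl
        | (exfalso; omega)
        | (simp_all [Fin.ext_iff]; try omega)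
        | (congr 1 <;> first | (apply Fin.ext; simp; omega) | omega)

/-- dot product skew identity -/
lemma skew_dot {N : ℕ} {M : Matrix (Fin N) (Fin N) ℝ} (hM : Mᵀ = -M)
    (x y : Fin N → ℝ) : x ⬝ᵥ (M *ᵥ y) = -((M *ᵥ x) ⬝ᵥ y) := by
  rw [dotProduct_mulVec, ← vecMul_transpose, hM, Matrix.vecMul_neg, neg_dotProduct, neg_neg]

lemma inner_eq_dot {N : ℕ} (x y : EuclideanSpace ℝ (Fin N)) :
    (inner ℝ x y : ℝ) = (x : Fin N → ℝ) ⬝ᵥ (y : Fin N → ℝ) := by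
  simp [PiLp.inner_apply, dotProduct, RCLike.inner_apply, mul_comm]

lemma exists_pair {N : ℕ} (hN : 2 ≤ N) (M : Matrix (Fin N) (Fin N) ℝ) (hM : Mᵀ = -M) :
    ∃ (u v : EuclideanSpace ℝ (Fin N)) (lam : ℝ),
      (u : Fin N → ℝ) ⬝ᵥ u = 1 ∧ (v : Fin N → ℝ) ⬝ᵥ v = 1 ∧ (u : Fin N → ℝ) ⬝ᵥ v = 0 ∧
      M *ᵥ u = lam • (v : Fin N → ℝ) ∧ M *ᵥ v = -(lam • (u : Fin N → ℝ)) := by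
  by_cases hM0 : M = 0
  · refine ⟨EuclideanSpace.single (⟨0, by omega⟩ : Fin N) (1:ℝ), EuclideanSpace.single (⟨1, by omega⟩ : Fin N) (1:ℝ), 0, ?_, ?_, ?_, ?_, ?_⟩ <;>
      simp [hM0, Pi.single_apply, dotProduct] <;> rfl
  · have hSsymm : (M * M)ᵀ = M * M := by rw [transpose_mul, hM, neg_mul_neg]
    have hS : (M * M).IsHermitian := by
      rwa [Matrix.IsHermitian, conjTranspose_eq_transpose_of_trivial]
    have key : ∀ x : Fin N → ℝ, x ⬝ᵥ ((M * M) *ᵥ x) = -((M *ᵥ x) ⬝ᵥ (M *ᵥ x)) := by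
      intro x
      rw [← Matrix.mulVec_mulVec, skew_dot hM]
    have hex : ∃ i, hS.eigenvalues i ≠ 0 := by
      by_contra hall
      push_neg at hall
      have hS0 : M * M = 0 := by
        have := hS.spectral_theorem
        rw [funext hall] at this
        simpa using this
      apply hM0
      ext i j
      have h2 : (M *ᵥ Pi.single j 1) = 0 := by
        rw [← dotProduct_self_eq_zero (v := M *ᵥ Pi.single j 1)]
        have h1 := key (Pi.single j 1)
        rw [hS0] at h1
        simp only [Matrix.zero_mulVec, dotProduct_zero] at h1
        linarith
      have := congrFun h2 i
      simpa using this
    obtain ⟨i, hi⟩ := hex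
    set μ := hS.eigenvalues i with hμdef
    set u : EuclideanSpace ℝ (Fin N) := hS.eigenvectorBasis i with hudef
    have hSu : (M * M) *ᵥ (u : Fin N → ℝ) = μ • (u : Fin N → ℝ) := hS.mulVec_eigenvectorBasis i
    have huu : (u : Fin N → ℝ) ⬝ᵥ u = 1 := by
      have h := orthonormal_iff_ite.mp hS.eigenvectorBasis.orthonormal i i
      rw [inner_eq_dot] at h
      simpa using h
    set t : ℝ := (M *ᵥ (u : Fin N → ℝ)) ⬝ᵥ (M *ᵥ u) with htdef
    have hmu : μ = -t := by
      have h1 := key u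
      rw [hSu, dotProduct_smul, smul_eq_mul, huu, mul_one] at h1
      rw [h1]
    have ht0 : 0 ≤ t := by
      apply Finset.sum_nonneg
      intro j _
      exact mul_self_nonneg _
    have htpos : 0 < t := by
      rcases ht0.lt_or_eq with h | h
      · exact h
      · exact absurd (by rw [hmu, ← h, neg_zero]) hi
    set lam : ℝ := Real.sqrt t with hlamdef
    have hlampos : 0 < lam := Real.sqrt_pos.2 htpos
    have hlamsq : lam * lam = t := Real.mul_self_sqrt ht0
    have hudot : (u : Fin N → ℝ) ⬝ᵥ (M *ᵥ u) = 0 := by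
      have h := skew_dot hM u u
      rw [dotProduct_comm (M *ᵥ (u : Fin N → ℝ)) u] at h
      linarith
    refine ⟨u, WithLp.toLp 2 (lam⁻¹ • (M *ᵥ (u : Fin N → ℝ)) : Fin N → ℝ), lam, huu, ?_, ?_, ?_, ?_⟩
    · rw [smul_dotProduct, dotProduct_smul, smul_eq_mul, smul_eq_mul, ← htdef, ← hlamsq]
      field_simp
    · rw [dotProduct_smul, smul_eq_mul, hudot, mul_zero]
    · rw [smul_smul, mul_inv_cancel₀ hlampos.ne', one_smul]
    · rw [Matrix.mulVec_smul, Matrix.mulVec_mulVec, hSu, hmu, smul_smul, ← neg_smul]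
      congr 1
      field_simp
      nlinarith [hlamsq]

/-- The key step: split off one 2×2 block. -/
lemma step {n : ℕ} (M : Matrix (Fin (2*(n+1))) (Fin (2*(n+1))) ℝ) (hM : Mᵀ = -M) :
    ∃ (R : Matrix (Fin (2*(n+1))) (Fin (2*(n+1))) ℝ) (c : ℝ)
      (M' : Matrix (Fin (2*n)) (Fin (2*n)) ℝ),
      R * Rᵀ = 1 ∧ M'ᵀ = -M' ∧
      M = R * (Matrix.reindex (finEquiv n) (finEquiv n)
        (Matrix.fromBlocks !![0, c; -c, 0] 0 0 M')) * Rᵀ := by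
  obtain ⟨u, v, lam, huu, hvv, huv, hMu, hMv⟩ := exists_pair (by omega) M hM
  set i0 : Fin (2*(n+1)) := ⟨0, by omega⟩ with hi0
  set i1 : Fin (2*(n+1)) := ⟨1, by omega⟩ with hi1
  have hne : i0 ≠ i1 := by simp [hi0, hi1, Fin.ext_iff]
  have hvu : (v : Fin (2*(n+1)) → ℝ) ⬝ᵥ u = 0 := by rw [dotProduct_comm]; exact huv
  have hortho : Orthonormal ℝ (({i0, i1} : Set (Fin (2*(n+1)))).restrict
      (fun i => if i = i0 then u else v)) := by
    rw [orthonormal_iff_ite]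
    rintro ⟨a, ha⟩ ⟨b, hb⟩
    simp only [Set.mem_insert_iff, Set.mem_singleton_iff] at ha hb
    simp only [Set.restrict_apply, Subtype.mk_eq_mk]
    rcases ha with rfl | rfl <;> rcases hb with rfl | rfl <;>
      rw [inner_eq_dot] <;> simp [Set.restrict, hne, hne.symm, huu, hvv, huv, hvu]
  obtain ⟨b, hb⟩ := hortho.exists_orthonormalBasis_extension_of_card_eq
    (by simp [finrank_euclideanSpace])
  have hb0 : b i0 = u := by
    have := hb i0 (by simp)
    simpa using this
  have hb1 : b i1 = v := by
    have := hb i1 (by simp)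
    simpa [hne.symm] using this
  set R : Matrix (Fin (2*(n+1))) (Fin (2*(n+1))) ℝ :=
    Matrix.of (fun i j => (b j : Fin (2*(n+1)) → ℝ) i) with hR
  have hRtR : Rᵀ * R = 1 := by
    ext i j
    have : (Rᵀ * R) i j = (b i : Fin (2*(n+1)) → ℝ) ⬝ᵥ (b j) := by
      simp [Matrix.mul_apply, dotProduct, hR]
    rw [this, ← inner_eq_dot, orthonormal_iff_ite.mp b.orthonormal i j, Matrix.one_apply]
  have hRRt : R * Rᵀ = 1 := mul_eq_one_comm.mp hRtR
  set Nm := Rᵀ * M * R with hNm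
  have hNentry : ∀ i j, Nm i j = (b i : Fin (2*(n+1)) → ℝ) ⬝ᵥ (M *ᵥ (b j)) := by
    intro i j
    rw [hNm, Matrix.mul_assoc, Matrix.mul_apply]
    simp only [dotProduct, mulVec, Matrix.mul_apply, hR, Matrix.of_apply,
      transpose_apply, dotProduct, Finset.mul_sum]
  have hskewN : Nmᵀ = -Nm := by
    rw [hNm, transpose_mul, transpose_mul, transpose_transpose, hM,
      Matrix.neg_mul, Matrix.mul_neg, ← Matrix.mul_assoc]
  have hrow : ∀ i j, Nm i j = -Nm j i := by
    intro i j
    have := congrFun (congrFun hskewN j) i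
    simpa using this
  have hcol0 : ∀ i j : Fin (2*(n+1)), (j : ℕ) = 0 →
      Nm i j = (if (i : ℕ) = 1 then lam else 0) := by
    intro i j hj
    have hj' : j = i0 := Fin.ext (by simpa [hi0] using hj)
    rw [hj', hNentry, hb0, hMu, dotProduct_smul, smul_eq_mul, ← hb1, ← inner_eq_dot,
      orthonormal_iff_ite.mp b.orthonormal i i1]
    have hiff : (i = i1) ↔ ((i : ℕ) = 1) := by rw [Fin.ext_iff, hi1]
    by_cases h : (i : ℕ) = 1 <;> simp [h, hiff]
  have hcol1 : ∀ i j : Fin (2*(n+1)), (j : ℕ) = 1 →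
      Nm i j = (if (i : ℕ) = 0 then -lam else 0) := by
    intro i j hj
    have hj' : j = i1 := Fin.ext hj
    rw [hj', hNentry, hb1, hMv, dotProduct_neg, dotProduct_smul, smul_eq_mul, ← hb0,
      ← inner_eq_dot, orthonormal_iff_ite.mp b.orthonormal i i0]
    have hiff : (i = i0) ↔ ((i : ℕ) = 0) := by rw [Fin.ext_iff, hi0]
    by_cases h : (i : ℕ) = 0 <;> simp [h, hiff]
  set M' : Matrix (Fin (2*n)) (Fin (2*n)) ℝ :=
    Matrix.of (fun a b' => Nm (finEquiv n (Sum.inr a)) (finEquiv n (Sum.inr b'))) with hM'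
  have hNform : Nm = Matrix.reindex (finEquiv n) (finEquiv n)
      (Matrix.fromBlocks !![0, -lam; -(-lam), 0] 0 0 M') := by
    ext i j
    obtain ⟨a, rfl⟩ := (finEquiv n).surjective i
    obtain ⟨c, rfl⟩ := (finEquiv n).surjective j
    rw [Matrix.reindex_apply, Matrix.submatrix_apply, Equiv.symm_apply_apply,
      Equiv.symm_apply_apply]
    rcases a with a | a <;> rcases c with c | c
    · fin_cases a <;> fin_cases c
      · rw [Matrix.fromBlocks_apply₁₁, hcol0 _ _ rfl]; simp [finEquiv_inl_val]
      · rw [Matrix.fromBlocks_apply₁₁, hcol1 _ _ rfl]; simp [finEquiv_inl_val]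
      · rw [Matrix.fromBlocks_apply₁₁, hcol0 _ _ rfl]; simp [finEquiv_inl_val]
      · rw [Matrix.fromBlocks_apply₁₁, hcol1 _ _ rfl]; simp [finEquiv_inl_val]
    · rw [Matrix.fromBlocks_apply₁₂, hrow]
      fin_cases a
      · rw [hcol0 _ _ rfl, if_neg (by rw [finEquiv_inr_val]; omega)]; simp
      · rw [hcol1 _ _ rfl, if_neg (by rw [finEquiv_inr_val]; omega)]; simp
    · rw [Matrix.fromBlocks_apply₂₁]
      fin_cases c
      · rw [hcol0 _ _ rfl, if_neg (by rw [finEquiv_inr_val]; omega)]; simp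
      · rw [hcol1 _ _ rfl, if_neg (by rw [finEquiv_inr_val]; omega)]; simp
    · rfl
  refine ⟨R, -lam, M', hRRt, ?_, ?_⟩
  · ext a b'
    simp only [transpose_apply, Matrix.neg_apply, hM', Matrix.of_apply]
    rw [hrow]
  · have hfix : R * Nm * Rᵀ = M := by
      rw [hNm, ← Matrix.mul_assoc, ← Matrix.mul_assoc, hRRt, Matrix.one_mul,
        Matrix.mul_assoc, hRRt, Matrix.mul_one]
    rw [← hNform, hfix]

lemma reindex_mul {n : ℕ} (A B : Matrix (Fin 2 ⊕ Fin (2*n)) (Fin 2 ⊕ Fin (2*n)) ℝ) :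
    (Matrix.reindex (finEquiv n) (finEquiv n) A) * (Matrix.reindex (finEquiv n) (finEquiv n) B)
      = Matrix.reindex (finEquiv n) (finEquiv n) (A * B) := by
  simp [Matrix.reindex_apply, Matrix.submatrix_mul_equiv]

/-- Orthogonal version of the normal form. -/
lemma ortho_form : ∀ (n : ℕ) (M : Matrix (Fin (2*n)) (Fin (2*n)) ℝ), Mᵀ = -M →
    ∃ (R : Matrix (Fin (2*n)) (Fin (2*n)) ℝ) (l : Fin n → ℝ),
      R * Rᵀ = 1 ∧ M = R * blockDiagAntisym l * Rᵀ := by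
  intro n
  induction n with
  | zero =>
    intro M hM
    refine ⟨1, fun _ => 0, by simp, ?_⟩
    ext i j
    exact absurd i.isLt (by omega)
  | succ n ih =>
    intro M hM
    obtain ⟨R1, c, M', hR1, hM', hMeq⟩ := step M hM
    obtain ⟨R2, l2, hR2, hM2⟩ := ih M' hM'
    set Q : Matrix (Fin (2*(n+1))) (Fin (2*(n+1))) ℝ :=
      Matrix.reindex (finEquiv n) (finEquiv n) (Matrix.fromBlocks 1 0 0 R2) with hQ
    have hQt : Qᵀ = Matrix.reindex (finEquiv n) (finEquiv n)
        (Matrix.fromBlocks 1 0 0 R2ᵀ) := by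
      rw [hQ, Matrix.transpose_reindex, Matrix.fromBlocks_transpose]
      simp
    have hQQ : Q * Qᵀ = 1 := by
      rw [hQt, hQ, reindex_mul, Matrix.fromBlocks_multiply]
      simp [hR2, Matrix.fromBlocks_one]
    have hmid : Matrix.reindex (finEquiv n) (finEquiv n)
        (Matrix.fromBlocks !![0, c; -c, 0] 0 0 M')
        = Q * blockDiagAntisym (consFun c l2) * Qᵀ := by
      rw [blockDiag_cons, hQt, hQ, reindex_mul, reindex_mul, Matrix.fromBlocks_multiply,
        Matrix.fromBlocks_multiply]
      simp [hM2, Matrix.mul_assoc]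
    refine ⟨R1 * Q, consFun c l2, ?_, ?_⟩
    · rw [Matrix.transpose_mul, Matrix.mul_assoc, ← Matrix.mul_assoc Q, hQQ,
        Matrix.one_mul, hR1]
    · rw [hMeq, hmid, Matrix.transpose_mul]
      simp [Matrix.mul_assoc]

end AntisymAux

/-- Every real antisymmetric `2n×2n` matrix `M` can be written as
`M = R · D · Rᵀ` with `R ∈ SO(2n)` and `D` block diagonal with blocks `[[0,λ_j],[-λ_j,0]]`. -/
theorem antisym_normal_form {n : ℕ} (M : Matrix (Fin (2*n)) (Fin (2*n)) ℝ)
    (hM : Mᵀ = -M) :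
    ∃ (R : Matrix (Fin (2*n)) (Fin (2*n)) ℝ) (l : Fin n → ℝ),
      R * Rᵀ = 1 ∧ R.det = 1 ∧ M = R * blockDiagAntisym l * Rᵀ := by
  obtain ⟨R, l, hR, hMeq⟩ := AntisymAux.ortho_form n M hM
  have hdet : R.det * R.det = 1 := by
    have := congrArg Matrix.det hR
    rwa [Matrix.det_mul, Matrix.det_transpose, Matrix.det_one] at this
  rcases mul_self_eq_one_iff.mp hdet with h1 | hm1
  · exact ⟨R, l, hR, h1, hMeq⟩
  · cases n with
    | zero =>
      haveI : IsEmpty (Fin (2*0)) := inferInstanceAs (IsEmpty (Fin 0))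
      exact ⟨R, l, hR, Matrix.det_isEmpty, hMeq⟩
    | succ m =>
      set j1 : Fin (2*(m+1)) := ⟨1, by omega⟩ with hj1
      set d : Fin (2*(m+1)) → ℝ := fun i => if (i : ℕ) = 1 then -1 else 1 with hd
      set F := Matrix.diagonal d with hF
      have hFt : Fᵀ = F := Matrix.diagonal_transpose d
      have hFF : F * F = 1 := by
        rw [hF, Matrix.diagonal_mul_diagonal]
        have : (fun i => d i * d i) = fun _ => (1 : ℝ) := by
          funext i
          simp only [hd]
          split_ifs <;> norm_num
        rw [this, Matrix.diagonal_one]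
      have hdF : F.det = -1 := by
        rw [hF, Matrix.det_diagonal, hd]
        have : ∀ i : Fin (2*(m+1)), (if (i : ℕ) = 1 then (-1:ℝ) else 1)
            = (if i = j1 then (-1:ℝ) else 1) := by
          intro i
          simp [Fin.ext_iff, hj1, Nat.mod_eq_of_lt (show 1 < 2*(m+1) by omega)]
        rw [Finset.prod_congr rfl (fun i _ => this i), Finset.prod_ite_eq']
        simp
      set l' : Fin (m+1) → ℝ := fun k => if (k : ℕ) = 0 then -(l k) else l k with hl'
      have hFDF : F * blockDiagAntisym l * F = blockDiagAntisym l' := by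
        ext i j
        rw [Matrix.mul_diagonal, Matrix.diagonal_mul]
        simp only [blockDiagAntisym, Matrix.of_apply, hl', hd]
        split_ifs
        all_goals try ring
        all_goals exfalso
        all_goals omega
      refine ⟨R * F, l', ?_, ?_, ?_⟩
      · rw [Matrix.transpose_mul, hFt, Matrix.mul_assoc, ← Matrix.mul_assoc F, hFF,
          Matrix.one_mul, hR]
      · rw [Matrix.det_mul, hdF, hm1]; norm_num
      · rw [← hFDF, hMeq, Matrix.transpose_mul, hFt]
        have : F * (F * blockDiagAntisym l * F) * F = blockDiagAntisym l := by
          simp only [← Matrix.mul_assoc]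
          rw [hFF, Matrix.one_mul, Matrix.mul_assoc, hFF, Matrix.mul_one]
        calc R * blockDiagAntisym l * Rᵀ
            = R * (F * (F * blockDiagAntisym l * F) * F) * Rᵀ := by rw [this]
          _ = R * F * (F * blockDiagAntisym l * F) * (F * Rᵀ) := by
              simp only [Matrix.mul_assoc]
end

section
/- For any complex antisymmetric 2n×2n matrix M, the Berezin integral of exp((i/2) θᵀ M θ) over all 2n Grassmann variables equals iⁿ Pf(M): ∫ Dθ exp((i/2) ∑_{a,b} M_{ab} θ_a θ_b) = iⁿ Pf(M). -/
open scoped BigOperators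
open Matrix

/-- Pfaffian of a `2n × 2n` matrix via the permutation-sum formula
`Pf(N) = (1/(2^n n!)) ∑_{σ} sgn(σ) N_{σ(1)σ(2)} ⋯ N_{σ(2n-1)σ(2n)}`. -/
noncomputable def pfaffian {R : Type*} [Field R] {n : ℕ} (N : Matrix (Fin (2*n)) (Fin (2*n)) R) : R :=
  ((2:R)^n * (n.factorial : R))⁻¹ *
    ∑ σ : Equiv.Perm (Fin (2*n)), ((Equiv.Perm.sign σ : ℤ) : R) *
      ∏ j : Fin n, N (σ ⟨2*j.val, by have := j.isLt; omega⟩) (σ ⟨2*j.val+1, by have := j.isLt; omega⟩)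
/-- Grassmann algebra on variables indexed by `ι`. -/
abbrev GA (ι : Type*) := ExteriorAlgebra ℂ (ι → ℂ)

/-- The Grassmann generator `θ_a`. -/
noncomputable def θv {ι : Type*} [DecidableEq ι] (a : ι) : GA ι :=
  ExteriorAlgebra.ι ℂ (Pi.single a 1)

/-- The partial derivative `∂/∂θ_a` (left interior product / Berezin integral `∫ dθ_a`). -/
noncomputable def pderiv (ι : Type*) [DecidableEq ι] (a : ι) : GA ι →ₗ[ℂ] GA ι :=
  CliffordAlgebra.contractLeft (Q := (0 : QuadraticForm ℂ (ι → ℂ))) (LinearMap.proj a)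

/-- Berezin integration along a list of variables (first element integrated first). -/
noncomputable def berezinAlong {ι : Type*} [DecidableEq ι] (l : List ι) : GA ι →ₗ[ℂ] GA ι :=
  l.foldl (fun acc a => pderiv ι a ∘ₗ acc) LinearMap.id

/-- Full Berezin integral `∫ Dθ = ∫dθ_n ⋯ ∫dθ_1`, normalized so that
`∫ Dθ θ_1⋯θ_n = 1` (the result of the operator is the coefficient of `θ_1⋯θ_n`,
viewed as a scalar inside the algebra). -/
noncomputable def berezin (n : ℕ) : GA (Fin n) →ₗ[ℂ] GA (Fin n) :=
  berezinAlong (List.ofFn (id : Fin n → Fin n))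

/-- Exponential defined by its (finite, since arguments are nilpotent) Taylor series,
truncated after `N` terms. -/
noncomputable def gexp {A : Type*} [Ring A] [Algebra ℂ A] (N : ℕ) (x : A) : A :=
  ∑ k ∈ Finset.range N, ((k.factorial : ℂ))⁻¹ • x ^ k

/-- The quadratic form `θᵀ M θ = ∑_{a,b} M_{ab} θ_a θ_b`. -/
noncomputable def quadform {n : ℕ} (M : Matrix (Fin n) (Fin n) ℂ) : GA (Fin n) :=
  ∑ a, ∑ b, M a b • (θv a * θv b)

namespace BGI

variable {N : ℕ}

noncomputable def prodθ (l : List (Fin N)) : GA (Fin N) := (l.map θv).prod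

@[simp] lemma prodθ_nil : prodθ (N := N) [] = 1 := rfl
@[simp] lemma prodθ_cons (a : Fin N) (l : List (Fin N)) : prodθ (a :: l) = θv a * prodθ l := by
  simp [prodθ]

@[simp] lemma pderiv_one (a : Fin N) : pderiv (Fin N) a 1 = 0 :=
  CliffordAlgebra.contractLeft_one _ _

lemma pderiv_mul (a b : Fin N) (x : GA (Fin N)) :
    pderiv (Fin N) a (θv b * x) = (if a = b then (1:ℂ) else 0) • x - θv b * pderiv (Fin N) a x := by
  have h := CliffordAlgebra.contractLeft_ι_mul (Q := (0 : QuadraticForm ℂ (Fin N → ℂ)))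
      (d := LinearMap.proj a) (Pi.single b 1) x
  simpa [pderiv, θv, Pi.single_apply] using h

lemma pderiv_prodθ_not_mem (a : Fin N) {l : List (Fin N)} (h : a ∉ l) :
    pderiv (Fin N) a (prodθ l) = 0 := by
  induction l with
  | nil => simp
  | cons b l ih =>
    have hab : a ≠ b := fun hh => h (hh ▸ List.mem_cons_self)
    rw [prodθ_cons, pderiv_mul, if_neg hab, ih (fun hh => h (List.mem_cons_of_mem _ hh))]
    simp

lemma foldl_comp (l : List (Fin N)) (acc : GA (Fin N) →ₗ[ℂ] GA (Fin N)) :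
    l.foldl (fun acc a => pderiv (Fin N) a ∘ₗ acc) acc = (berezinAlong l) ∘ₗ acc := by
  induction l generalizing acc with
  | nil => simp [berezinAlong]
  | cons b l ih =>
    rw [List.foldl_cons, ih]
    conv_rhs => rw [berezinAlong, List.foldl_cons, ih]
    ext x; simp

lemma berezinAlong_cons (a : Fin N) (l : List (Fin N)) :
    berezinAlong (a :: l) = (berezinAlong l) ∘ₗ pderiv (Fin N) a := by
  rw [berezinAlong, List.foldl_cons, foldl_comp]
  ext x; simp

lemma berezinAlong_self {l : List (Fin N)} (h : l.Nodup) :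
    berezinAlong l (prodθ l) = 1 := by
  induction l with
  | nil => simp [berezinAlong]
  | cons b l ih =>
    rw [berezinAlong_cons]
    have hb : b ∉ l := (List.nodup_cons.mp h).1
    simp only [LinearMap.comp_apply, prodθ_cons, pderiv_mul, if_pos rfl,
      pderiv_prodθ_not_mem b hb, mul_zero, sub_zero, one_smul, if_true, eq_self_iff_true]
    exact ih (List.nodup_cons.mp h).2


noncomputable def Pm (N m : ℕ) : Submodule ℂ (GA (Fin N)) :=
  Submodule.span ℂ {x | ∃ c : List (Fin N), c.length = m ∧ x = prodθ c}

lemma prodθ_mem {m : ℕ} {c : List (Fin N)} (h : c.length = m) : prodθ c ∈ Pm N m :=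
  Submodule.subset_span ⟨c, h, rfl⟩

lemma mul_mem_Pm {m : ℕ} (b : Fin N) {x : GA (Fin N)} (hx : x ∈ Pm N m) :
    θv b * x ∈ Pm N (m + 1) := by
  induction hx using Submodule.span_induction with
  | mem x h =>
    obtain ⟨c, hc, rfl⟩ := h
    rw [← prodθ_cons]
    exact prodθ_mem (by simp [hc])
  | zero => simp
  | add x y _ _ hx hy => rw [mul_add]; exact add_mem hx hy
  | smul r x _ hx => rw [mul_smul_comm]; exact Submodule.smul_mem _ _ hx

lemma pderiv_prodθ_mem (a : Fin N) {m : ℕ} {c : List (Fin N)} (h : c.length = m + 1) :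
    pderiv (Fin N) a (prodθ c) ∈ Pm N m := by
  induction c generalizing m with
  | nil => simp at h
  | cons b c ih =>
    simp only [List.length_cons] at h
    rw [prodθ_cons, pderiv_mul]
    refine sub_mem (Submodule.smul_mem _ _ (prodθ_mem (by omega))) ?_
    cases m with
    | zero =>
      have hc : c = [] := List.length_eq_zero_iff.mp (by omega)
      subst hc
      rw [prodθ_nil, pderiv_one, mul_zero]
      exact zero_mem _
    | succ m' => exact mul_mem_Pm b (ih (by omega))

lemma pderiv_Pm (a : Fin N) {m : ℕ} {x : GA (Fin N)} (hx : x ∈ Pm N (m + 1)) :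
    pderiv (Fin N) a x ∈ Pm N m := by
  induction hx using Submodule.span_induction with
  | mem x h => obtain ⟨c, hc, rfl⟩ := h; exact pderiv_prodθ_mem a hc
  | zero => simp
  | add x y _ _ hx hy => rw [map_add]; exact add_mem hx hy
  | smul r x _ hx => rw [LinearMap.map_smul]; exact Submodule.smul_mem _ _ hx

lemma pderiv_Pm_zero (a : Fin N) {x : GA (Fin N)} (hx : x ∈ Pm N 0) :
    pderiv (Fin N) a x = 0 := by
  induction hx using Submodule.span_induction with
  | mem x h =>
    obtain ⟨c, hc, rfl⟩ := h
    have : c = [] := List.length_eq_zero_iff.mp hc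
    subst this; simp
  | zero => simp
  | add x y _ _ hx hy => rw [map_add, hx, hy, add_zero]
  | smul r x _ hx => rw [LinearMap.map_smul, hx, smul_zero]

lemma berezinAlong_Pm_zero {l : List (Fin N)} {m : ℕ} {x : GA (Fin N)}
    (hx : x ∈ Pm N m) (h : m < l.length) : berezinAlong l x = 0 := by
  induction l generalizing m x with
  | nil => simp at h
  | cons b l ih =>
    rw [berezinAlong_cons, LinearMap.comp_apply]
    cases m with
    | zero => rw [pderiv_Pm_zero b hx, map_zero]
    | succ m' => exact ih (pderiv_Pm b hx) (by simpa using Nat.lt_of_succ_lt_succ h)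


noncomputable def pairList {k : ℕ} (c : Fin k → Fin N × Fin N) : List (Fin N) :=
  (List.ofFn c).flatMap (fun p => [p.1, p.2])

lemma pairList_cons {k : ℕ} (p : Fin N × Fin N) (c : Fin k → Fin N × Fin N) :
    pairList (Fin.cons p c) = p.1 :: p.2 :: pairList c := by
  simp [pairList, List.ofFn_succ]

lemma pairList_length {k : ℕ} (c : Fin k → Fin N × Fin N) :
    (pairList c).length = 2 * k := by
  induction k with
  | zero => simp [pairList]
  | succ k ih =>
    rw [← Fin.cons_self_tail c, pairList_cons]
    simp only [List.length_cons, ih (Fin.tail c)]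
    omega

noncomputable def quadform' (M : Matrix (Fin N) (Fin N) ℂ) : GA (Fin N) :=
  ∑ a, ∑ b, M a b • (θv a * θv b)

lemma quadform'_eq (M : Matrix (Fin N) (Fin N) ℂ) :
    quadform' M = ∑ p : Fin N × Fin N, M p.1 p.2 • (θv p.1 * θv p.2) := by
  rw [quadform', Fintype.sum_prod_type]

lemma qpow (M : Matrix (Fin N) (Fin N) ℂ) (k : ℕ) :
    (quadform' M) ^ k
      = ∑ c : Fin k → Fin N × Fin N,
          (∏ j, M (c j).1 (c j).2) • prodθ (pairList c) := by
  induction k with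
  | zero =>
    rw [pow_zero, Fintype.sum_unique]
    simp [pairList]
  | succ k ih =>
    rw [pow_succ', ih, quadform'_eq, Finset.sum_mul_sum]
    have h1 : ∀ q : (Fin N × Fin N) × (Fin k → Fin N × Fin N),
        (M q.1.1 q.1.2 • (θv q.1.1 * θv q.1.2)) *
            ((∏ j, M (q.2 j).1 (q.2 j).2) • prodθ (pairList q.2))
          = (∏ j, M ((Fin.cons q.1 q.2 : Fin (k+1) → Fin N × Fin N) j).1
                ((Fin.cons q.1 q.2 : Fin (k+1) → Fin N × Fin N) j).2) •
              prodθ (pairList (Fin.cons q.1 q.2)) := by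
      rintro ⟨p, c⟩
      rw [Fin.prod_univ_succ, pairList_cons, prodθ_cons, prodθ_cons]
      simp only [Fin.cons_zero, Fin.cons_succ]
      rw [smul_mul_smul_comm, mul_assoc]
    rw [← Finset.sum_product', Finset.univ_product_univ]
    exact Fintype.sum_equiv (Fin.consEquiv (fun _ => Fin N × Fin N)) _ _ (fun q => h1 q)

def itl {k : ℕ} (c : Fin k → Fin N × Fin N) : Fin (2*k) → Fin N := fun j =>
  if j.val % 2 = 0 then (c ⟨j.val / 2, by have := j.isLt; omega⟩).1
  else (c ⟨j.val / 2, by have := j.isLt; omega⟩).2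

lemma itl_cons_zero {k : ℕ} (p : Fin N × Fin N) (c : Fin k → Fin N × Fin N)
    (h : 0 < 2*(k+1)) : itl (Fin.cons p c) ⟨0, h⟩ = p.1 := by
  norm_num [itl]

lemma itl_cons_one {k : ℕ} (p : Fin N × Fin N) (c : Fin k → Fin N × Fin N)
    (h : 1 < 2*(k+1)) : itl (Fin.cons p c) ⟨1, h⟩ = p.2 := by
  norm_num [itl]

lemma itl_cons_succ_succ {k : ℕ} (p : Fin N × Fin N) (c : Fin k → Fin N × Fin N)
    (i : ℕ) (hi : i < 2*k) (h : i + 2 < 2*(k+1)) :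
    itl (Fin.cons p c) ⟨i+2, h⟩ = itl c ⟨i, hi⟩ := by
  simp only [itl]
  have h2 : (i+2) % 2 = i % 2 := by omega
  have h3 : (⟨(i+2)/2, by omega⟩ : Fin (k+1)) = Fin.succ ⟨i/2, by omega⟩ := by
    apply Fin.ext
    simp only [Fin.succ_mk]
    omega
  rw [h2, h3, Fin.cons_succ]

lemma ofFn_itl_cons {k : ℕ} (p : Fin N × Fin N) (c : Fin k → Fin N × Fin N) :
    List.ofFn (itl (Fin.cons p c)) = p.1 :: p.2 :: List.ofFn (itl c) := by
  apply List.ext_getElem (by simp only [List.length_ofFn, List.length_cons]; omega)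
  intro i h1 h2
  rw [List.getElem_ofFn]
  rcases i with _|_|i
  · rw [List.getElem_cons_zero]
    exact itl_cons_zero p c (by omega)
  · rw [List.getElem_cons_succ, List.getElem_cons_zero]
    exact itl_cons_one p c (by omega)
  · rw [List.getElem_cons_succ, List.getElem_cons_succ, List.getElem_ofFn]
    have hi : i < 2*k := by
      simp only [List.length_cons, List.length_ofFn] at h2
      omega
    exact itl_cons_succ_succ p c i hi (by omega)

lemma pairList_eq_ofFn_itl {k : ℕ} (c : Fin k → Fin N × Fin N) :
    pairList c = List.ofFn (itl c) := by
  induction k with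
  | zero =>
    have : List.ofFn (n := 0) (itl c) = [] := List.ofFn_zero
    rw [this]
    simp [pairList]
  | succ k ih =>
    rw [← Fin.cons_self_tail c, pairList_cons, ofFn_itl_cons, ih]

lemma single_injective :
    Function.Injective (fun i : Fin N => (Pi.single i 1 : Fin N → ℂ)) := by
  intro a b h
  by_contra hab
  have h1 : (Pi.single a 1 : Fin N → ℂ) a = (Pi.single b 1 : Fin N → ℂ) a := congrFun h a
  rw [Pi.single_eq_same, Pi.single_eq_of_ne (fun hh : a = b => hab hh)] at h1
  exact one_ne_zero h1

lemma prodθ_ofFn {m : ℕ} (v : Fin m → Fin N) :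
    prodθ (List.ofFn v)
      = ExteriorAlgebra.ιMulti ℂ m (fun j => (Pi.single (v j) 1 : Fin N → ℂ)) := by
  rw [ExteriorAlgebra.ιMulti_apply, prodθ, List.map_ofFn]
  rfl

lemma prodθ_ofFn_eq_zero {m : ℕ} (v : Fin m → Fin N) (hv : ¬ Function.Injective v) :
    prodθ (List.ofFn v) = 0 := by
  rw [prodθ_ofFn]
  apply AlternatingMap.map_eq_zero_of_not_injective
  intro hinj
  exact hv (fun x y hxy => hinj (by simp only [hxy]))

lemma prodθ_ofFn_perm (σ : Equiv.Perm (Fin N)) :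
    prodθ (List.ofFn (⇑σ)) = ((Equiv.Perm.sign σ : ℤ) : ℂ) • prodθ (List.ofFn (id : Fin N → Fin N)) := by
  rw [prodθ_ofFn, prodθ_ofFn]
  have h := AlternatingMap.map_perm (g := ExteriorAlgebra.ιMulti ℂ N)
    (fun j : Fin N => (Pi.single j 1 : Fin N → ℂ)) σ
  have h2 : ((fun j : Fin N => (Pi.single j 1 : Fin N → ℂ)) ∘ ⇑σ)
      = fun j => (Pi.single (σ j) 1 : Fin N → ℂ) := rfl
  rw [h2] at h
  rw [h, Int.cast_smul_eq_zsmul]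
  simp [Units.smul_def]


lemma berezin_top (N : ℕ) :
    berezin N (prodθ (List.ofFn (id : Fin N → Fin N))) = 1 := by
  apply berezinAlong_self
  exact List.nodup_ofFn.mpr (fun x y h => h)

noncomputable def jmap {n : ℕ} (σ : Equiv.Perm (Fin (2*n))) : Fin n → Fin (2*n) × Fin (2*n) :=
  fun j => (σ ⟨2*j.val, by have := j.isLt; omega⟩, σ ⟨2*j.val+1, by have := j.isLt; omega⟩)

lemma itl_jmap {n : ℕ} (σ : Equiv.Perm (Fin (2*n))) (i : Fin (2*n)) :
    itl (N := 2*n) (jmap σ) i = σ i := by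
  by_cases h : i.val % 2 = 0
  · simp only [itl, jmap, if_pos h]
    exact congrArg σ (Fin.ext (by simp; omega))
  · simp only [itl, jmap, if_neg h]
    exact congrArg σ (Fin.ext (by simp; omega))

lemma jmap_injective {n : ℕ} : Function.Injective (jmap (n := n)) := by
  intro σ τ h
  have h2 : itl (N := 2*n) (jmap σ) = itl (jmap τ) := by rw [h]
  apply Equiv.coe_fn_injective
  funext i
  have h3 := congrFun h2 i
  rwa [itl_jmap σ i, itl_jmap τ i] at h3

lemma jmap_surj {n : ℕ} {c : Fin n → Fin (2*n) × Fin (2*n)}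
    (hc : Function.Injective (itl (N := 2*n) c)) : ∃ σ, jmap σ = c := by
  have hbij : Function.Bijective (itl (N := 2*n) c) := Finite.injective_iff_bijective.mp hc
  refine ⟨Equiv.ofBijective _ hbij, ?_⟩
  funext j
  have hlt := j.isLt
  apply Prod.ext
  · show itl (N := 2*n) c ⟨2*j.val, by omega⟩ = (c j).1
    simp only [itl]
    rw [if_pos (by omega)]
    have hv : (⟨2*j.val/2, by omega⟩ : Fin n) = j := by
      apply Fin.ext
      show 2*j.val/2 = j.val
      omega
    exact congrArg (fun x => (c x).1) hv
  · show itl (N := 2*n) c ⟨2*j.val+1, by omega⟩ = (c j).2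
    simp only [itl]
    rw [if_neg (by omega)]
    have hv : (⟨(2*j.val+1)/2, by omega⟩ : Fin n) = j := by
      apply Fin.ext
      show (2*j.val+1)/2 = j.val
      omega
    exact congrArg (fun x => (c x).2) hv

lemma berezin_qpow_n {n : ℕ} (M : Matrix (Fin (2*n)) (Fin (2*n)) ℂ) :
    berezin (2*n) ((quadform' M) ^ n)
      = (∑ σ : Equiv.Perm (Fin (2*n)), ((Equiv.Perm.sign σ : ℤ) : ℂ) *
          ∏ j : Fin n, M (jmap σ j).1 (jmap σ j).2) • (1 : GA (Fin (2*n))) := by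
  rw [qpow, map_sum]
  have hzero : ∀ c ∈ (Finset.univ : Finset (Fin n → Fin (2*n) × Fin (2*n))),
      c ∉ Finset.image jmap Finset.univ →
      berezin (2*n) ((∏ j, M (c j).1 (c j).2) • prodθ (pairList c)) = 0 := by
    intro c _ hc
    have hni : ¬ Function.Injective (itl (N := 2*n) c) := by
      intro hinj
      obtain ⟨σ, hσ⟩ := jmap_surj hinj
      exact hc (Finset.mem_image.mpr ⟨σ, Finset.mem_univ _, hσ⟩)
    rw [pairList_eq_ofFn_itl, prodθ_ofFn_eq_zero _ hni, smul_zero, map_zero]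
  rw [← Finset.sum_subset (Finset.subset_univ _) hzero]
  rw [Finset.sum_image (fun σ _ τ _ h => jmap_injective h)]
  have hterm : ∀ σ : Equiv.Perm (Fin (2*n)),
      berezin (2*n) ((∏ j, M (jmap σ j).1 (jmap σ j).2) • prodθ (pairList (jmap σ)))
        = (((Equiv.Perm.sign σ : ℤ) : ℂ) *
            ∏ j : Fin n, M (jmap σ j).1 (jmap σ j).2) • (1 : GA (Fin (2*n))) := by
    intro σ
    have h1 : pairList (jmap σ) = List.ofFn (⇑σ) := by
      rw [pairList_eq_ofFn_itl]
      exact congrArg List.ofFn (funext (itl_jmap σ))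
    rw [h1, prodθ_ofFn_perm, LinearMap.map_smul, LinearMap.map_smul, berezin_top, smul_smul]
    congr 1
    ring
  simp only [hterm]
  rw [← Finset.sum_smul]

lemma qpow_high (M : Matrix (Fin N) (Fin N) ℂ) {k : ℕ} (h : N < 2*k) :
    quadform' M ^ k = 0 := by
  rw [qpow]
  apply Finset.sum_eq_zero
  intro c _
  have hni : ¬ Function.Injective (itl (N := N) c) := by
    intro hinj
    have := Fintype.card_le_of_injective _ hinj
    simp only [Fintype.card_fin] at this
    omega
  rw [pairList_eq_ofFn_itl, prodθ_ofFn_eq_zero _ hni, smul_zero]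

lemma berezin_qpow_low (M : Matrix (Fin N) (Fin N) ℂ) {k : ℕ} (h : 2*k < N) :
    berezin N (quadform' M ^ k) = 0 := by
  apply berezinAlong_Pm_zero (m := 2*k)
  · rw [qpow]
    apply Submodule.sum_mem
    intro c _
    exact Submodule.smul_mem _ _ (prodθ_mem (pairList_length c))
  · rw [List.length_ofFn]
    exact h

end BGI

/-- For any complex antisymmetric `2n×2n` matrix `M`, the Berezin integral
of `exp((i/2) θᵀ M θ)` over all `2n` Grassmann variables equals `iⁿ Pf(M)`. -/
theorem berezin_gaussian_integral {n : ℕ} (M : Matrix (Fin (2*n)) (Fin (2*n)) ℂ)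
    (hM : Mᵀ = -M) :
    berezin (2*n) (gexp (2*n+1) ((Complex.I / 2) • quadform M))
      = algebraMap ℂ (GA (Fin (2*n))) (Complex.I ^ n * pfaffian M) := by
  classical
  have hq : quadform M = BGI.quadform' M := rfl
  rw [gexp]
  rw [map_sum]
  rw [Finset.sum_eq_single_of_mem n (Finset.mem_range.mpr (by omega))]
  · rw [hq, smul_pow, LinearMap.map_smul, LinearMap.map_smul, BGI.berezin_qpow_n M]
    rw [smul_smul, smul_smul, Algebra.algebraMap_eq_smul_one]
    have hS : (∑ σ : Equiv.Perm (Fin (2*n)), ((Equiv.Perm.sign σ : ℤ) : ℂ) *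
        ∏ j : Fin n, M (BGI.jmap σ j).1 (BGI.jmap σ j).2)
      = ∑ σ : Equiv.Perm (Fin (2*n)), ((Equiv.Perm.sign σ : ℤ) : ℂ) *
        ∏ j : Fin n, M (σ ⟨2*j.val, by have := j.isLt; omega⟩)
          (σ ⟨2*j.val+1, by have := j.isLt; omega⟩) := rfl
    congr 1
    rw [pfaffian, div_pow, mul_inv, hS]
    ring
  · intro k _ hk
    rw [hq, smul_pow, LinearMap.map_smul, LinearMap.map_smul]
    rcases lt_or_gt_of_ne hk with hlt | hgt
    · rw [BGI.berezin_qpow_low M (by omega), smul_zero, smul_zero]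
    · rw [BGI.qpow_high M (by omega), map_zero, smul_zero, smul_zero]
end

section
/- Wick's theorem for Gaussian states: let ρ ∈ C_{2n} have Grassmann representation ω(ρ)(θ) = 2^{-n} exp((i/2) θᵀ M θ) for a real antisymmetric matrix M with MᵀM ≤ I. Then for any indices 1 ≤ a_1 < ⋯ < a_{2p} ≤ 2n, tr(ρ · i^p c_{a_1}⋯c_{a_{2p}}) = Pf(M|_{a_1,…,a_{2p}}), where M|_{a_1,…,a_{2p}} is the 2p×2p submatrix of M with the indicated rows and columns. -/
open scoped BigOperators
open Matrix

set_option linter.unusedSectionVars false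
set_option maxHeartbeats 1000000
section AuxWick
namespace Wick3
variable {ι : Type*}

lemma sum_pow_eq {A : Type*} [Ring A] [Fintype ι] (F : ι → A) :
    ∀ k : ℕ, (∑ x, F x) ^ k = ∑ g : Fin k → ι, (List.ofFn (fun j => F (g j))).prod
  | 0 => by
      rw [pow_zero]
      rw [Fintype.sum_subsingleton _ (fun i : Fin 0 => i.elim0)]
      simp
  | k + 1 => by
      rw [pow_succ', sum_pow_eq F k, Finset.sum_mul_sum, ← Fintype.sum_prod_type']
      refine Fintype.sum_equiv (Fin.consEquiv (fun _ => ι)) _ _ (fun q => ?_)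
      simp only [Fin.consEquiv, Equiv.coe_fn_mk]
      rw [List.ofFn_succ]
      simp [Fin.cons_zero, Fin.cons_succ]

lemma ofFn_smul_prod {A : Type*} [Ring A] [Algebra ℂ A] :
    ∀ {k : ℕ} (bs : Fin k → ℂ) (xs : Fin k → A),
      (List.ofFn (fun j => bs j • xs j)).prod = (∏ j, bs j) • (List.ofFn xs).prod
  | 0, bs, xs => by simp
  | k + 1, bs, xs => by
      rw [List.ofFn_succ, List.ofFn_succ, List.prod_cons, List.prod_cons,
        ofFn_smul_prod (fun j => bs j.succ) (fun j => xs j.succ),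
        Fin.prod_univ_succ, smul_mul_smul_comm]

def pl (e : ι × ι) : List ι := [e.1, e.2]

lemma flatMap_pl_length (gl : List (ι × ι)) : (gl.flatMap pl).length = 2 * gl.length := by
  induction gl with
  | nil => simp
  | cons e gl ih => simp [pl, ih]; omega

lemma flatMap_pl_getElem : ∀ (gl : List (ι × ι)) (i : ℕ) (h : i < (gl.flatMap pl).length)
    (h2 : i / 2 < gl.length),
    (gl.flatMap pl)[i] = (if i % 2 = 0 then (gl[i/2]).1 else (gl[i/2]).2)
  | e :: gl, 0, h, h2 => by simp [pl]
  | e :: gl, 1, h, h2 => by simp [pl]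
  | e :: gl, (i+2), h, h2 => by
      have hl : (e :: gl).flatMap pl = e.1 :: e.2 :: gl.flatMap pl := by simp [pl]
      have h' : i < (gl.flatMap pl).length := by
        rw [flatMap_pl_length] at h ⊢; simp at h; omega
      have h2' : i / 2 < gl.length := by simp at h2; omega
      have : (i+2)/2 = i/2 + 1 := by omega
      simp only [hl]
      rw [List.getElem_cons_succ, List.getElem_cons_succ,
        flatMap_pl_getElem gl i h' h2']
      have hmod : (i+2) % 2 = i % 2 := by omega
      simp only [hmod, this]
      rw [List.getElem_cons_succ]


lemma prod_map_flatMap_pl {A : Type*} [Monoid A] (f : ι → A) :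
    ∀ gl : List (ι × ι), ((gl.flatMap pl).map f).prod = (gl.map (fun e => f e.1 * f e.2)).prod
  | [] => by simp
  | e :: gl => by
      simp only [List.flatMap_cons, List.map_append, List.prod_append, List.map_cons,
        List.prod_cons, prod_map_flatMap_pl f gl]
      simp [pl]

end Wick3

namespace Wick4
variable {κ : Type*} [DecidableEq κ] {A : Type*} [Ring A] [Algebra ℂ A]
variable (cc : κ → A)

def cP (l : List κ) : A := (l.map cc).prod

@[simp] lemma cP_nil : cP cc ([] : List κ) = 1 := rfl
lemma cP_cons (x : κ) (l : List κ) : cP cc (x :: l) = cc x * cP cc l := by simp [cP]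
lemma cP_append (l₁ l₂ : List κ) : cP cc (l₁ ++ l₂) = cP cc l₁ * cP cc l₂ := by simp [cP]

variable (hsq : ∀ b, cc b * cc b = 1)
variable (hac : ∀ a b, a ≠ b → cc a * cc b = -(cc b * cc a))

section
include hsq hac

lemma conj_lemma : ∀ (l : List κ) (b : κ),
    cc b * cP cc l = ((-1:ℂ) ^ ((l.filter (· ≠ b)).length)) • (cP cc l * cc b)
  | [], b => by simp
  | x :: l, b => by
      have ih := conj_lemma l b
      by_cases hx : x = b
      · subst hx
        have hfil : ((x :: l).filter (· ≠ x)) = l.filter (· ≠ x) := by simp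
        have ih' : cP cc l * cc x = ((-1:ℂ) ^ ((l.filter (· ≠ x)).length)) • (cc x * cP cc l) := by
          rw [ih, smul_smul, ← pow_add, ← two_mul, pow_mul, neg_one_sq, one_pow, one_smul]
        rw [hfil, cP_cons, ← mul_assoc, hsq x, one_mul, mul_assoc, ih',
          mul_smul_comm, ← mul_assoc, hsq x, one_mul, smul_smul, ← pow_add,
          ← two_mul, pow_mul, neg_one_sq, one_pow, one_smul]
      · have hfil : ((x :: l).filter (· ≠ b)) = x :: l.filter (· ≠ b) := by
          simp [hx]
        rw [hfil, cP_cons, ← mul_assoc, hac b x (Ne.symm hx), neg_mul, mul_assoc, ih,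
          mul_smul_comm, ← neg_smul, ← mul_assoc, List.length_cons, pow_succ, mul_neg_one]

lemma sq_lemma : ∀ (l : List κ), l.Nodup →
    cP cc l * cP cc l = ((-1:ℂ) ^ (l.length.choose 2)) • 1
  | [], _ => by simp
  | x :: l, hnd => by
      have hx : x ∉ l := (List.nodup_cons.mp hnd).1
      have ih := sq_lemma l (List.nodup_cons.mp hnd).2
      have hfull : l.filter (· ≠ x) = l := by
        rw [List.filter_eq_self]
        intro y hy
        simp only [decide_eq_true_eq]
        exact fun h => hx (h ▸ hy)
      have hcomm : cP cc l * cc x = ((-1:ℂ) ^ l.length) • (cc x * cP cc l) := by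
        have h := conj_lemma cc hsq hac l x
        rw [hfull] at h
        rw [h, smul_smul, ← pow_add, ← two_mul, pow_mul, neg_one_sq, one_pow, one_smul]
      have hch : (l.length + 1).choose 2 = l.length.choose 2 + l.length := by
        rw [Nat.choose_succ_succ]
        simp [Nat.choose_one_right, Nat.add_comm]
      rw [cP_cons, mul_assoc, ← mul_assoc (cP cc l), hcomm, smul_mul_assoc, mul_smul_comm,
        ← mul_assoc, ← mul_assoc, hsq x, one_mul, ih, smul_smul, List.length_cons, hch,
        pow_add, mul_comm]

end

section Trace
variable {m : Type*} [Fintype m] [DecidableEq m]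
variable (c : κ → Matrix m m ℂ)
variable (hsqm : ∀ b, c b * c b = 1)
variable (hacm : ∀ a b, a ≠ b → c a * c b = -(c b * c a))
include hsqm hacm

lemma trace_cP_eq_zero_of_odd (l : List κ) (b : κ)
    (hodd : Odd ((l.filter (· ≠ b)).length)) : (cP c l).trace = 0 := by
  have h := conj_lemma c hsqm hacm l b
  rw [hodd.neg_one_pow] at h
  have h2 : c b * cP c l * c b = -(cP c l) := by
    rw [h, smul_mul_assoc, neg_one_smul, mul_assoc, hsqm b, mul_one]
  have h3 : (c b * cP c l * c b).trace = (cP c l).trace := by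
    rw [Matrix.trace_mul_comm (c b * cP c l) (c b), ← mul_assoc, hsqm b, one_mul]
  rw [h2] at h3
  simp only [Matrix.trace_neg] at h3
  have h4 : (2:ℂ) * (cP c l).trace = 0 := by linear_combination - h3
  exact (mul_eq_zero.mp h4).resolve_left two_ne_zero

end Trace
end Wick4

namespace Wick
variable {ι : Type*} [DecidableEq ι]

noncomputable def θP (l : List ι) : GA ι := (l.map θv).prod

@[simp] lemma θP_nil : θP ([] : List ι) = 1 := rfl
lemma θP_cons (x : ι) (l : List ι) : θP (x :: l) = θv x * θP l := by
  simp [θP]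

lemma θP_append (l₁ l₂ : List ι) : θP (l₁ ++ l₂) = θP l₁ * θP l₂ := by
  simp [θP]

lemma pderiv_θv (a b : ι) :
    pderiv ι a (θv b) = algebraMap ℂ (GA ι) (if b = a then 1 else 0) := by
  rw [pderiv, θv, ExteriorAlgebra.ι, CliffordAlgebra.contractLeft_ι]
  simp [Pi.single_apply, eq_comm]

lemma pderiv_θv_mul (a b : ι) (y : GA ι) :
    pderiv ι a (θv b * y) = (if b = a then (1:ℂ) else 0) • y - θv b * pderiv ι a y := by
  rw [pderiv, θv, ExteriorAlgebra.ι, CliffordAlgebra.contractLeft_ι_mul]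
  simp only [LinearMap.proj_apply, Pi.single_apply]
  congr 1
  simp [eq_comm]

lemma pderiv_θP_not_mem {a : ι} : ∀ {l : List ι}, a ∉ l → pderiv ι a (θP l) = 0
  | [], _ => by
      simp only [θP_nil]
      exact CliffordAlgebra.contractLeft_one _ _
  | x :: l, h => by
      have hx : x ≠ a := fun h' => h (h' ▸ List.mem_cons_self)
      have hl : a ∉ l := fun h' => h (List.mem_cons_of_mem _ h')
      rw [θP_cons, pderiv_θv_mul, if_neg hx, pderiv_θP_not_mem hl]
      simp

lemma counit_θP_ne_nil {l : List ι} (h : l ≠ []) :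
    ExteriorAlgebra.algebraMapInv (θP l) = 0 := by
  cases l with
  | nil => exact absurd rfl h
  | cons x l =>
      rw [θP_cons, _root_.map_mul]
      have : ExteriorAlgebra.algebraMapInv (θv x) = 0 := by
        simp [θv, ExteriorAlgebra.algebraMapInv]
      rw [this, zero_mul]

noncomputable def Dl : List ι → (GA ι →ₗ[ℂ] GA ι)
  | [] => LinearMap.id
  | b :: r => (Dl r) ∘ₗ pderiv ι b

@[simp] lemma Dl_nil : Dl ([] : List ι) = LinearMap.id := rfl
lemma Dl_cons (b : ι) (r : List ι) (x : GA ι) :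
    Dl (b :: r) x = Dl r (pderiv ι b x) := rfl

lemma Dl_self : ∀ {l : List ι}, l.Nodup → Dl l (θP l) = 1
  | [], _ => by simp
  | x :: l, h => by
      have hx : x ∉ l := (List.nodup_cons.mp h).1
      rw [Dl_cons, θP_cons, pderiv_θv_mul, if_pos rfl, pderiv_θP_not_mem hx]
      simpa using Dl_self (List.nodup_cons.mp h).2

lemma pderiv_θP_mem {b : ι} : ∀ {L : List ι}, L.Nodup → b ∈ L →
    ∃ ε : ℂ, (ε = 1 ∨ ε = -1) ∧ pderiv ι b (θP L) = ε • θP (L.erase b)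
  | [], _, hb => absurd hb List.not_mem_nil
  | x :: L, hnd, hb => by
      by_cases hx : x = b
      · subst hx
        have hxL : x ∉ L := (List.nodup_cons.mp hnd).1
        refine ⟨1, Or.inl rfl, ?_⟩
        rw [θP_cons, pderiv_θv_mul, if_pos rfl, pderiv_θP_not_mem hxL,
          List.erase_cons_head]
        simp
      · have hbL : b ∈ L := by
          rcases List.mem_cons.mp hb with h | h
          · exact absurd h.symm hx
          · exact h
        obtain ⟨ε, hε, hps⟩ := pderiv_θP_mem (List.nodup_cons.mp hnd).2 hbL
        refine ⟨-ε, ?_, ?_⟩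
        · rcases hε with h | h <;> simp [h]
        · rw [θP_cons, pderiv_θv_mul, if_neg hx, hps,
            List.erase_cons_tail (by simp [hx]), θP_cons]
          rw [mul_smul_comm]
          simp

lemma perm_of_Dl_ne_zero : ∀ (S : List ι) (L : List ι), L.Nodup →
    ExteriorAlgebra.algebraMapInv (Dl S (θP L)) ≠ 0 → L.Perm S
  | [], L, _, h => by
      simp only [Dl_nil, LinearMap.id_coe, id_eq] at h
      cases L with
      | nil => exact List.Perm.refl _
      | cons x l => exact absurd (counit_θP_ne_nil (by simp)) h
  | b :: S', L, hnd, h => by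
      rw [Dl_cons] at h
      by_cases hb : b ∈ L
      · obtain ⟨ε, hε, hps⟩ := pderiv_θP_mem hnd hb
        rw [hps, _root_.map_smul, _root_.map_smul] at h
        have hε0 : ε ≠ 0 := by rcases hε with h' | h' <;> simp [h']
        have h' : ExteriorAlgebra.algebraMapInv (Dl S' (θP (L.erase b))) ≠ 0 := by
          intro h0; rw [h0] at h; simp at h
        have := perm_of_Dl_ne_zero S' (L.erase b) (hnd.erase b) h'
        exact (List.perm_cons_erase hb).trans (this.cons b)
      · rw [pderiv_θP_not_mem hb] at h
        simp at h



lemma θP_ofFn_eq_ιMulti {m : ℕ} (f : Fin m → ι) :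
    θP (List.ofFn f) = ExteriorAlgebra.ιMulti ℂ m (fun i => (Pi.single (f i) 1 : ι → ℂ)) := by
  rw [ExteriorAlgebra.ιMulti_apply, θP, List.map_ofFn]
  rfl

lemma θP_eq_zero_of_not_nodup {L : List ι} (h : ¬ L.Nodup) : θP L = 0 := by
  rw [List.nodup_iff_injective_get] at h
  rw [Function.not_injective_iff] at h
  obtain ⟨i, j, hij, hne⟩ := h
  have : θP (List.ofFn L.get) = 0 := by
    rw [θP_ofFn_eq_ιMulti]
    exact AlternatingMap.map_eq_zero_of_eq _ _ (by rw [hij]) hne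
  rwa [List.ofFn_get] at this

lemma θP_perm_sign {m : ℕ} (f : Fin m → ι) (σ : Equiv.Perm (Fin m)) :
    θP (List.ofFn (fun i => f (σ i)))
      = ((Equiv.Perm.sign σ : ℤ) : ℂ) • θP (List.ofFn f) := by
  rw [θP_ofFn_eq_ιMulti, θP_ofFn_eq_ιMulti]
  have := AlternatingMap.map_perm (ExteriorAlgebra.ιMulti ℂ m)
    (fun i => (Pi.single (f i) 1 : ι → ℂ)) σ
  rw [show ((fun i => (Pi.single (f i) 1 : ι → ℂ)) ∘ ⇑σ) = fun i => Pi.single (f (σ i)) 1 from rfl] at this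
  rw [this, Units.smul_def, ← Int.cast_smul_eq_zsmul ℂ]

variable [LinearOrder ι]

/-- The coefficient-of-`θ_T` functional. -/
noncomputable def coefF (T : Finset ι) : GA ι →ₗ[ℂ] ℂ :=
  (ExteriorAlgebra.algebraMapInv : GA ι →ₐ[ℂ] ℂ).toLinearMap ∘ₗ Dl (T.sort (· ≤ ·))

lemma coefF_apply (T : Finset ι) (x : GA ι) :
    coefF T x = ExteriorAlgebra.algebraMapInv (Dl (T.sort (· ≤ ·)) x) := rfl

lemma coefF_θP_self (T : Finset ι) : coefF T (θP (T.sort (· ≤ ·))) = 1 := by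
  rw [coefF_apply, Dl_self (T.sort_nodup _)]
  exact _root_.map_one _

lemma perm_of_coefF_ne_zero {T : Finset ι} {L : List ι}
    (h : coefF T (θP L) ≠ 0) : L.Nodup ∧ L.Perm (T.sort (· ≤ ·)) := by
  by_cases hnd : L.Nodup
  · exact ⟨hnd, perm_of_Dl_ne_zero _ _ hnd h⟩
  · rw [θP_eq_zero_of_not_nodup hnd] at h
    simp at h



open Wick3 in
lemma flatMap_pl_glue {p : ℕ} (g g' : Fin p → ι × ι)
    (h : (List.ofFn g).flatMap pl = (List.ofFn g').flatMap pl) : g = g' := by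
  funext j
  have hlen : ∀ (f : Fin p → ι × ι), ((List.ofFn f).flatMap pl).length = 2 * p := by
    intro f; rw [flatMap_pl_length, List.length_ofFn]
  have key : ∀ (f : Fin p → ι × ι) (i : ℕ) (hi : i < 2*p),
      ((List.ofFn f).flatMap pl)[i]'(by rw [hlen]; exact hi)
        = (if i % 2 = 0 then (f ⟨i/2, by omega⟩).1 else (f ⟨i/2, by omega⟩).2) := by
    intro f i hi
    rw [flatMap_pl_getElem _ i (by rw [hlen]; exact hi)
      (by rw [List.length_ofFn]; omega)]
    by_cases hpar : i % 2 = 0 <;> simp [hpar, List.getElem_ofFn]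
  have h1 : j.val * 2 < 2 * p := by have := j.isLt; omega
  have h2 : j.val * 2 + 1 < 2 * p := by have := j.isLt; omega
  have e1 := (key g (j.val * 2) h1).symm.trans
    ((List.getElem_of_eq h (by rw [hlen]; exact h1)).trans (key g' (j.val * 2) h1))
  have e2 := (key g (j.val * 2 + 1) h2).symm.trans
    ((List.getElem_of_eq h (by rw [hlen]; exact h2)).trans (key g' (j.val * 2 + 1) h2))
  have hmod : (j.val * 2) % 2 = 0 := by omega
  have hmod2 : (j.val * 2 + 1) % 2 = 1 := by omega
  have hdiv : (j.val * 2) / 2 = j.val := by omega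
  have hdiv2 : (j.val * 2 + 1) / 2 = j.val := by omega
  simp only [hmod, hdiv, if_pos rfl] at e1
  simp only [hmod2, hdiv2] at e2
  norm_num at e2
  exact Prod.ext (by simpa using e1) (by simpa using e2)

lemma exists_perm {p : ℕ} (a : Fin (2*p) → ι) (hainj : Function.Injective a)
    {L : List ι} (hnd : L.Nodup) (hlen : L.length = 2*p)
    (hset : ∀ x, x ∈ L ↔ ∃ i, a i = x) :
    ∃ σ : Equiv.Perm (Fin (2*p)), L = List.ofFn (fun i => a (σ i)) := by
  set f : Fin (2*p) → ι := fun i => L.get (Fin.cast hlen.symm i) with hf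
  have finj : Function.Injective f := by
    intro i j h
    have := List.nodup_iff_injective_get.mp hnd h
    exact Fin.cast_injective _ this
  have hrange : Set.range f = Set.range a := by
    ext x
    constructor
    · rintro ⟨i, rfl⟩
      exact (hset _).mp (List.get_mem L _)
    · rintro ⟨i, rfl⟩
      have : a i ∈ L := (hset _).mpr ⟨i, rfl⟩
      obtain ⟨k, hk⟩ := List.mem_iff_get.mp this
      exact ⟨Fin.cast hlen k, by simpa [hf] using hk⟩
  refine ⟨(Equiv.ofInjective f finj).trans
    ((Equiv.setCongr hrange).trans (Equiv.ofInjective a hainj).symm), ?_⟩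
  have haf : ∀ i, a ((Equiv.ofInjective f finj |>.trans
      ((Equiv.setCongr hrange).trans (Equiv.ofInjective a hainj).symm)) i) = f i := by
    intro i
    simp only [Equiv.trans_apply, Equiv.setCongr_apply]
    exact Equiv.apply_ofInjective_symm hainj _
  refine List.ext_getElem (by simp [hlen]) ?_
  intro i h1 h2
  rw [List.getElem_ofFn]
  rw [haf]
  simp [hf]

lemma sort_image_ofFn {p : ℕ} [LinearOrder ι] (a : Fin p → ι) (ha : StrictMono a) :
    (Finset.image a Finset.univ).sort (· ≤ ·) = List.ofFn a := by
  have hnd : (List.ofFn a).Nodup := List.nodup_ofFn.mpr ha.injective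
  have hsorted : List.Pairwise (· ≤ ·) (List.ofFn a) := by
    rw [List.pairwise_iff_getElem]
    intro i j hi hj hij
    simp only [List.getElem_ofFn]
    exact le_of_lt (ha (by simpa using hij))
  have hperm : ((Finset.image a Finset.univ).sort (· ≤ ·)).Perm (List.ofFn a) := by
    apply List.perm_of_nodup_nodup_toFinset_eq (Finset.sort_nodup _ _) hnd
    ext x
    simp only [List.mem_toFinset, Finset.mem_sort, Finset.mem_image, List.mem_ofFn]
    constructor
    · rintro ⟨i, _, rfl⟩; exact ⟨i, rfl⟩
    · rintro ⟨i, rfl⟩; exact ⟨i, Finset.mem_univ _, rfl⟩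
  exact List.Perm.eq_of_pairwise' (Finset.pairwise_sort _ _) hsorted hperm

open Wick3 in
lemma coefF_gexp {N K p : ℕ} (Mc : Matrix (Fin N) (Fin N) ℂ)
    (a : Fin (2*p) → Fin N) (ha : StrictMono a) (hpK : p < K) :
    coefF (Finset.image a Finset.univ)
        (gexp K ((Complex.I/2) • quadform Mc))
      = (Complex.I/2)^p * ((p.factorial : ℂ))⁻¹ *
        ∑ σ : Equiv.Perm (Fin (2*p)), ((Equiv.Perm.sign σ : ℤ) : ℂ) *
          ∏ j : Fin p, Mc (a (σ ⟨2*j.val, by have := j.isLt; omega⟩))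
            (a (σ ⟨2*j.val+1, by have := j.isLt; omega⟩)) := by
  classical
  set T := Finset.image a Finset.univ with hT
  have hTcard : T.card = 2*p := by
    rw [hT, Finset.card_image_of_injective _ ha.injective, Finset.card_univ, Fintype.card_fin]
  have hsortT : T.sort (· ≤ ·) = List.ofFn a := sort_image_ofFn a ha
  set B : Fin N × Fin N → ℂ := fun e => (Complex.I/2) * Mc e.1 e.2 with hB
  have hQ : (Complex.I/2) • quadform Mc
      = ∑ e : Fin N × Fin N, B e • (θv e.1 * θv e.2) := by
    rw [show quadform Mc = ∑ a', ∑ b', Mc a' b' • (θv a' * θv b') from rfl, Finset.smul_sum]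
    simp_rw [Finset.smul_sum, smul_smul]
    rw [← Fintype.sum_prod_type']
  have hpow : ∀ k, ((Complex.I/2) • quadform Mc) ^ k
      = ∑ g : Fin k → Fin N × Fin N,
          (∏ j, B (g j)) • θP ((List.ofFn g).flatMap pl) := by
    intro k
    rw [hQ, sum_pow_eq]
    refine Finset.sum_congr rfl (fun g _ => ?_)
    rw [ofFn_smul_prod (fun j => B (g j)) (fun j => θv (g j).1 * θv (g j).2)]
    congr 1
    rw [θP, prod_map_flatMap_pl θv (List.ofFn g), List.map_ofFn]
    rfl
  have hlenL : ∀ {k : ℕ} (g : Fin k → Fin N × Fin N),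
      ((List.ofFn g).flatMap pl).length = 2*k := by
    intro k g; rw [flatMap_pl_length, List.length_ofFn]
  have hterm : ∀ k, coefF T (((Complex.I/2) • quadform Mc) ^ k)
      = ∑ g : Fin k → Fin N × Fin N,
          (∏ j, B (g j)) * coefF T (θP ((List.ofFn g).flatMap pl)) := by
    intro k
    rw [hpow k, map_sum]
    exact Finset.sum_congr rfl fun g _ => by rw [_root_.map_smul, smul_eq_mul]
  have hvan : ∀ k, k ≠ p → coefF T (((Complex.I/2) • quadform Mc) ^ k) = 0 := by
    intro k hk
    rw [hterm k]
    refine Finset.sum_eq_zero (fun g _ => ?_)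
    rcases eq_or_ne (coefF T (θP ((List.ofFn g).flatMap pl))) 0 with h0 | h0
    · rw [h0, mul_zero]
    · exfalso
      have := (perm_of_coefF_ne_zero h0).2.length_eq
      rw [hlenL g, Finset.length_sort, hTcard] at this
      omega
  rw [gexp, map_sum]
  rw [Finset.sum_eq_single_of_mem p (Finset.mem_range.mpr hpK)
    (fun k _ hk => by rw [_root_.map_smul, hvan k hk, smul_zero])]
  rw [_root_.map_smul, hterm p, smul_eq_mul]
  set lo : Fin p → Fin (2*p) := fun j => ⟨2*j.val, by have := j.isLt; omega⟩ with hlo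
  set hi : Fin p → Fin (2*p) := fun j => ⟨2*j.val+1, by have := j.isLt; omega⟩ with hhi
  set gmap : Equiv.Perm (Fin (2*p)) → (Fin p → Fin N × Fin N) :=
    fun σ j => (a (σ (lo j)), a (σ (hi j))) with hgmap
  have hL : ∀ σ : Equiv.Perm (Fin (2*p)),
      (List.ofFn (gmap σ)).flatMap pl = List.ofFn (fun i => a (σ i)) := by
    intro σ
    refine List.ext_getElem (by rw [hlenL]; rw [List.length_ofFn]) ?_
    intro i h1 h2
    have hi2 : i < 2*p := by rw [hlenL] at h1; exact h1
    rw [flatMap_pl_getElem _ i h1 (by rw [List.length_ofFn]; omega), List.getElem_ofFn]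
    by_cases hpar : i % 2 = 0
    · rw [if_pos hpar]
      rw [List.getElem_ofFn]
      show a (σ (lo ⟨i/2, _⟩)) = a (σ ⟨i, hi2⟩)
      have hfin : lo ⟨i/2, by omega⟩ = ⟨i, hi2⟩ := by
        apply Fin.ext; simp only [hlo]; omega
      rw [hfin]
    · rw [if_neg hpar]
      rw [List.getElem_ofFn]
      show a (σ (hi ⟨i/2, _⟩)) = a (σ ⟨i, hi2⟩)
      have hfin : hi ⟨i/2, by omega⟩ = ⟨i, hi2⟩ := by
        apply Fin.ext; simp only [hhi]; omega
      rw [hfin]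
  have hsortTset : (T.sort (· ≤ ·)).toFinset = T := by
    ext x; simp [Finset.mem_sort]
  have hmain : ∑ g : Fin p → Fin N × Fin N,
        (∏ j, B (g j)) * coefF T (θP ((List.ofFn g).flatMap pl))
      = ∑ σ : Equiv.Perm (Fin (2*p)), ((Equiv.Perm.sign σ : ℤ) : ℂ) *
          ((Complex.I/2)^p * ∏ j : Fin p,
            Mc (a (σ (lo j))) (a (σ (hi j)))) := by
    refine (Finset.sum_of_injOn gmap ?_ (fun σ _ => Finset.mem_univ _) ?_ ?_).symm
    · intro σ _ σ' _ hg
      have h1 := hL σ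
      rw [hg, hL σ'] at h1
      have h2 := List.ofFn_inj.mp h1
      ext i
      rw [ha.injective (congrFun h2 i)]
    · intro g _ hg
      rcases eq_or_ne (coefF T (θP ((List.ofFn g).flatMap pl))) 0 with h0 | h0
      · rw [h0, mul_zero]
      · exfalso
        obtain ⟨hnd, hperm⟩ := perm_of_coefF_ne_zero h0
        have hlen' : ((List.ofFn g).flatMap pl).length = 2*p := by
          rw [hperm.length_eq, Finset.length_sort, hTcard]
        have hmem : ∀ x, x ∈ (List.ofFn g).flatMap pl ↔ ∃ i, a i = x := by
          intro x
          rw [← List.mem_toFinset, List.toFinset_eq_of_perm _ _ hperm, hsortTset, hT]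
          simp
        obtain ⟨σ, hσ⟩ := exists_perm a ha.injective hnd hlen' hmem
        apply hg
        refine ⟨σ, by simp, ?_⟩
        have := flatMap_pl_glue (gmap σ) g (by rw [hL σ, ← hσ])
        exact this
    · intro σ _
      rw [hL σ, θP_perm_sign a σ, _root_.map_smul, smul_eq_mul, ← hsortT, coefF_θP_self, mul_one]
      have hBprod : (∏ j, B (gmap σ j))
          = (Complex.I/2)^p * ∏ j : Fin p, Mc (a (σ (lo j))) (a (σ (hi j))) := by
        rw [hgmap, hB]
        simp only []
        rw [Finset.prod_mul_distrib, Finset.prod_const, Finset.card_univ, Fintype.card_fin]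
      rw [hBprod, mul_comm]
  rw [hmain, Finset.mul_sum, Finset.mul_sum]
  refine Finset.sum_congr rfl (fun σ _ => ?_)
  have hprodeq : (∏ j : Fin p, Mc (a (σ ⟨2*j.val, by have := j.isLt; omega⟩))
        (a (σ ⟨2*j.val+1, by have := j.isLt; omega⟩)))
      = ∏ j : Fin p, Mc (a (σ (lo j))) (a (σ (hi j))) := rfl
  rw [show (Complex.I/2)^p * ((p.factorial : ℂ))⁻¹ *
        (((Equiv.Perm.sign σ : ℤ) : ℂ) * ∏ j : Fin p, Mc (a (σ (lo j))) (a (σ (hi j))))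
      = ((p.factorial : ℂ))⁻¹ * (((Equiv.Perm.sign σ : ℤ) : ℂ) *
          ((Complex.I/2)^p * ∏ j : Fin p, Mc (a (σ (lo j))) (a (σ (hi j))))) from by ring]

end Wick

section Parity
variable {κ : Type*} [DecidableEq κ]

lemma filter_ne_of_not_mem {b : κ} : ∀ {l : List κ}, b ∉ l → l.filter (· ≠ b) = l := by
  intro l hb
  rw [List.filter_eq_self]
  intro x hx
  simp only [ne_eq, decide_eq_true_eq]
  exact fun h => hb (h ▸ hx)

lemma filter_ne_length_of_mem {b : κ} : ∀ {l : List κ}, l.Nodup → b ∈ l →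
    (l.filter (· ≠ b)).length + 1 = l.length
  | [], _, hb => absurd hb List.not_mem_nil
  | x :: l, hnd, hb => by
      by_cases hx : x = b
      · subst hx
        have hxl : x ∉ l := (List.nodup_cons.mp hnd).1
        rw [List.filter_cons_of_neg (by simp), filter_ne_of_not_mem hxl, List.length_cons]
      · have hbl : b ∈ l := by
          rcases List.mem_cons.mp hb with h | h
          · exact absurd h.symm hx
          · exact h
        rw [List.filter_cons_of_pos (by simp [hx]), List.length_cons, List.length_cons,
          filter_ne_length_of_mem (List.nodup_cons.mp hnd).2 hbl]

lemma sort_filter_len {κ' : Type*} [DecidableEq κ'] [LinearOrder κ'] (U : Finset κ') (b : κ') :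
    (((U.sort (· ≤ ·)).filter (· ≠ b)).length) = U.card - (if b ∈ U then 1 else 0) := by
  by_cases hb : b ∈ U
  · rw [if_pos hb]
    have := filter_ne_length_of_mem (U.sort_nodup (· ≤ ·)) ((Finset.mem_sort _).mpr hb)
    rw [Finset.length_sort] at this
    omega
  · rw [if_neg hb, filter_ne_of_not_mem (fun h => hb ((Finset.mem_sort _).mp h)),
      Finset.length_sort]
    omega

lemma exists_good_b {n : ℕ} (S T : Finset (Fin (2*n))) (hST : S ≠ T) :
    ∃ b, Odd ((((S.sort (· ≤ ·)) ++ (T.sort (· ≤ ·))).filter (· ≠ b)).length) := by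
  have hlen : ∀ b, (((S.sort (· ≤ ·)) ++ (T.sort (· ≤ ·))).filter (· ≠ b)).length
      = (S.card - (if b ∈ S then 1 else 0)) + (T.card - (if b ∈ T then 1 else 0)) := by
    intro b
    rw [List.filter_append, List.length_append, sort_filter_len, sort_filter_len]
  rcases Nat.even_or_odd (S.card + T.card) with hpar | hpar
  · have : ∃ b, ¬(b ∈ S ↔ b ∈ T) := by
      by_contra h
      push_neg at h
      exact hST (Finset.ext fun b => h b)
    obtain ⟨b, hb⟩ := this
    refine ⟨b, ?_⟩
    rw [hlen b, Nat.odd_iff]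
    rw [Nat.even_iff] at hpar
    by_cases h1 : b ∈ S <;> by_cases h2 : b ∈ T
    · exact absurd (iff_of_true h1 h2) hb
    · have : 1 ≤ S.card := Finset.card_pos.mpr ⟨b, h1⟩
      simp only [if_pos h1, if_neg h2]
      omega
    · have : 1 ≤ T.card := Finset.card_pos.mpr ⟨b, h2⟩
      simp only [if_neg h1, if_pos h2]
      omega
    · exact absurd (iff_of_false h1 h2) hb
  · have : ∃ b, (b ∈ S ↔ b ∈ T) := by
      by_contra h
      push_neg at h
      have hTc : T = Sᶜ := by
        ext b
        have := h b
        by_cases hb : b ∈ S <;> simp [hb] at this ⊢ <;> tauto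
      have h1 := Finset.card_add_card_compl S
      have h2 : T.card = Sᶜ.card := by rw [hTc]
      have h3 : Fintype.card (Fin (2*n)) = 2*n := Fintype.card_fin _
      rw [Nat.odd_iff] at hpar
      omega
    obtain ⟨b, hb⟩ := this
    refine ⟨b, ?_⟩
    rw [hlen b, Nat.odd_iff]
    rw [Nat.odd_iff] at hpar
    by_cases h1 : b ∈ S <;> by_cases h2 : b ∈ T
    · have hc1 : 1 ≤ S.card := Finset.card_pos.mpr ⟨b, h1⟩
      have hc2 : 1 ≤ T.card := Finset.card_pos.mpr ⟨b, h2⟩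
      simp only [if_pos h1, if_pos h2]
      omega
    · exact absurd (hb.mp h1) h2
    · exact absurd (hb.mpr h2) h1
    · simp only [if_neg h1, if_neg h2]
      omega

end Parity

end AuxWick

/-- Wick's theorem for Gaussian states: let `ρ` have Grassmann representation
`ω(ρ) = 2^{-n} exp((i/2) θᵀ M θ)` for a real antisymmetric `M` with `MᵀM ≤ I`, where `ω` is
the linear isomorphism sending ordered Clifford monomials to Grassmann monomials. Then for
`1 ≤ a_1 < ⋯ < a_{2p} ≤ 2n`,
`tr(ρ · i^p c_{a_1}⋯c_{a_{2p}}) = Pf(M|_{a_1,…,a_{2p}})`. -/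
theorem wick_theorem {n : ℕ}
    (c : Fin (2*n) → Matrix (Fin (2^n)) (Fin (2^n)) ℂ)
    (hrel : ∀ a b, c a * c b + c b * c a = if a = b then 2 else 0)
    (hherm : ∀ a, (c a)ᴴ = c a)
    (ω : Matrix (Fin (2^n)) (Fin (2^n)) ℂ →ₗ[ℂ] GA (Fin (2*n)))
    (hω : ∀ S : Finset (Fin (2*n)),
      ω ((S.sort (· ≤ ·) |>.map c).prod) = (S.sort (· ≤ ·) |>.map θv).prod)
    (M : Matrix (Fin (2*n)) (Fin (2*n)) ℝ) (hM : Mᵀ = -M)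
    (hMI : (1 - Mᵀ * M).PosSemidef)
    (ρ : Matrix (Fin (2^n)) (Fin (2^n)) ℂ)
    (hρ : ω ρ = ((2:ℂ)^n)⁻¹ •
      gexp (2*n+1) ((Complex.I / 2) • quadform (M.map Complex.ofReal)))
    (p : ℕ) (a : Fin (2*p) → Fin (2*n)) (ha : StrictMono a) :
    (ρ * (Complex.I ^ p • ((List.ofFn fun j : Fin (2*p) => c (a j)).prod))).trace
      = Complex.ofReal (pfaffian (M.submatrix a a)) := by
  classical
  -- Clifford algebra relations
  have hsq : ∀ b, c b * c b = 1 := by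
    intro b
    have h := hrel b b
    rw [if_pos rfl] at h
    have h2 : (2:ℂ) • (c b * c b) = (2:ℂ) • (1 : Matrix (Fin (2^n)) (Fin (2^n)) ℂ) := by
      rw [two_smul, two_smul, h, one_add_one_eq_two]
    exact smul_right_injective _ (two_ne_zero (α := ℂ)) h2
  have hac : ∀ x y, x ≠ y → c x * c y = -(c y * c x) := by
    intro x y hxy
    have h := hrel x y
    rw [if_neg hxy] at h
    exact eq_neg_of_add_eq_zero_left h
  set T : Finset (Fin (2*n)) := Finset.image a Finset.univ with hTdef
  have h2p2n : 2*p ≤ 2*n := by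
    have := Fintype.card_le_of_injective a ha.injective
    simpa using this
  have hTcard : T.card = 2*p := by
    rw [hTdef, Finset.card_image_of_injective _ ha.injective, Finset.card_univ, Fintype.card_fin]
  have hsortT : T.sort (· ≤ ·) = List.ofFn a := Wick.sort_image_ofFn a ha
  -- monomial families
  set cmono : Finset (Fin (2*n)) → Matrix (Fin (2^n)) (Fin (2^n)) ℂ :=
    fun S => Wick4.cP c (S.sort (· ≤ ·)) with hcm
  set θmono : Finset (Fin (2*n)) → GA (Fin (2*n)) :=
    fun S => Wick.θP (S.sort (· ≤ ·)) with hθm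
  have hωS : ∀ S, ω (cmono S) = θmono S := fun S => hω S
  -- delta property of the coefficient functionals
  have hdelta : ∀ S U : Finset (Fin (2*n)),
      Wick.coefF U (θmono S) = if S = U then 1 else 0 := by
    intro S U
    by_cases h : S = U
    · subst h
      rw [if_pos rfl]
      exact Wick.coefF_θP_self S
    · rw [if_neg h]
      by_contra h0
      obtain ⟨hnd, hperm⟩ := Wick.perm_of_coefF_ne_zero h0
      have heq := List.Perm.eq_of_pairwise' (Finset.pairwise_sort _ _) (Finset.pairwise_sort _ _) hperm
      apply h
      ext x
      rw [← Finset.mem_sort (α := Fin (2*n)) (· ≤ ·), heq, Finset.mem_sort]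
  -- linear independence and basis
  have li : LinearIndependent ℂ cmono := by
    rw [Fintype.linearIndependent_iff]
    intro g hg S
    have hω0 : ∑ S', g S' • θmono S' = 0 := by
      have h1 := congrArg ω hg
      rw [map_sum, map_zero] at h1
      simp only [_root_.map_smul, hωS] at h1
      exact h1
    have h2 := congrArg (Wick.coefF S) hω0
    rw [map_sum, map_zero] at h2
    simp only [_root_.map_smul, hdelta, smul_eq_mul, mul_ite, mul_one, mul_zero] at h2
    rwa [Finset.sum_ite_eq' Finset.univ S g, if_pos (Finset.mem_univ S)] at h2
  have hcard : Fintype.card (Finset (Fin (2*n)))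
      = Module.finrank ℂ (Matrix (Fin (2^n)) (Fin (2^n)) ℂ) := by
    rw [Fintype.card_finset, Module.finrank_matrix, Module.finrank_self]
    simp only [Fintype.card_fin, mul_one]
    rw [two_mul, pow_add]
  let Bb := basisOfLinearIndependentOfCardEqFinrank li hcard
  have hBb : ⇑Bb = cmono := coe_basisOfLinearIndependentOfCardEqFinrank li hcard
  set r : Finset (Fin (2*n)) → ℂ := fun S => Bb.repr ρ S with hr
  have hexp : ρ = ∑ S, r S • cmono S := by
    have h1 := Bb.sum_repr ρ
    rw [hBb] at h1
    exact h1.symm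
  -- trace orthogonality
  have htr0 : ∀ S, S ≠ T → (cmono S * cmono T).trace = 0 := by
    intro S hS
    obtain ⟨b, hb⟩ := exists_good_b S T hS
    have h1 := Wick4.trace_cP_eq_zero_of_odd c hsq hac
      (S.sort (· ≤ ·) ++ T.sort (· ≤ ·)) b hb
    rwa [Wick4.cP_append] at h1
  have htrT : (cmono T * cmono T).trace = (-1:ℂ)^p * 2^n := by
    rw [hcm]
    rw [Wick4.sq_lemma c hsq hac _ (T.sort_nodup (· ≤ ·))]
    rw [Matrix.trace_smul, Matrix.trace_one]
    have hlen : (T.sort (· ≤ ·)).length = 2*p := by rw [Finset.length_sort, hTcard]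
    have hch : ((T.sort (· ≤ ·)).length).choose 2 = p * (2*p - 1) := by
      rw [hlen, Nat.choose_two_right]
      have : 2*p*(2*p-1) = 2*(p*(2*p-1)) := by ring
      rw [this, Nat.mul_div_cancel_left _ (by norm_num)]
    rw [hch]
    have hsign : (-1:ℂ)^(p*(2*p-1)) = (-1:ℂ)^p := by
      rcases Nat.eq_zero_or_pos p with hp | hp
      · subst hp; simp
      · rw [mul_comm p, pow_mul]
        have : ((-1:ℂ))^(2*p-1) = -1 := Odd.neg_one_pow ⟨p-1, by omega⟩
        rw [this]
    rw [hsign]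
    simp [smul_eq_mul, Fintype.card_fin, mul_comm]
  -- the target Clifford monomial
  have hLofFn : (List.ofFn fun j : Fin (2*p) => c (a j)).prod = cmono T := by
    rw [hcm]
    show _ = ((T.sort (· ≤ ·)).map c).prod
    rw [hsortT, List.map_ofFn]
    rfl
  -- the coefficient r T
  have hrT : r T = ((2:ℂ)^n)⁻¹ * ((Complex.I/2)^p * ((p.factorial : ℂ))⁻¹ *
      ∑ σ : Equiv.Perm (Fin (2*p)), ((Equiv.Perm.sign σ : ℤ) : ℂ) *
        ∏ j : Fin p, (M.map Complex.ofReal) (a (σ ⟨2*j.val, by have := j.isLt; omega⟩))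
          (a (σ ⟨2*j.val+1, by have := j.isLt; omega⟩))) := by
    have hωρ : ω ρ = ∑ S, r S • θmono S := by
      conv_lhs => rw [hexp]
      rw [map_sum]
      simp only [_root_.map_smul, hωS]
    have h1 : Wick.coefF T (ω ρ) = r T := by
      rw [hωρ, map_sum]
      simp only [_root_.map_smul, hdelta, smul_eq_mul, mul_ite, mul_one, mul_zero]
      rw [Finset.sum_ite_eq' Finset.univ T r, if_pos (Finset.mem_univ T)]
    have h2 := Wick.coefF_gexp (K := 2*n+1) (M.map Complex.ofReal) a ha (by omega)
    rw [← h1, hρ, _root_.map_smul, smul_eq_mul]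
    rw [← hTdef] at h2
    rw [h2]
  -- assemble
  rw [hLofFn, mul_smul_comm, Matrix.trace_smul, smul_eq_mul]
  have htr : (ρ * cmono T).trace = r T * ((-1:ℂ)^p * 2^n) := by
    conv_lhs => rw [hexp]
    rw [Finset.sum_mul, Matrix.trace_sum]
    have : ∀ S ∈ Finset.univ, ((r S • cmono S) * cmono T).trace
        = r S * (cmono S * cmono T).trace := by
      intro S _
      rw [smul_mul_assoc, Matrix.trace_smul, smul_eq_mul]
    rw [Finset.sum_congr rfl this]
    rw [Finset.sum_eq_single_of_mem T (Finset.mem_univ T)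
      (fun S _ hS => by rw [htr0 S hS, mul_zero])]
    rw [htrT]
  rw [htr, hrT]
  -- cast the Pfaffian
  have hsub : ∀ (x y : Fin (2*p)), (M.submatrix a a) x y = M (a x) (a y) := fun x y => rfl
  have hmap : ∀ (x y : Fin (2*n)), (M.map Complex.ofReal) x y = Complex.ofReal (M x y) :=
    fun x y => rfl
  have hpf : (Complex.ofReal (pfaffian (M.submatrix a a)) : ℂ)
      = (((2:ℂ)^p * (p.factorial : ℂ)))⁻¹ *
        ∑ σ : Equiv.Perm (Fin (2*p)), ((Equiv.Perm.sign σ : ℤ) : ℂ) *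
          ∏ j : Fin p, (M.map Complex.ofReal) (a (σ ⟨2*j.val, by have := j.isLt; omega⟩))
            (a (σ ⟨2*j.val+1, by have := j.isLt; omega⟩)) := by
    rw [pfaffian]
    push_cast [Matrix.submatrix_apply, Matrix.map_apply]
    ring
  rw [hpf]
  have hkey : Complex.I ^ p * ((Complex.I/2)^p * (-1:ℂ)^p) = ((2:ℂ)^p)⁻¹ := by
    rw [div_pow]
    have h1 : Complex.I^p * (Complex.I^p / (2:ℂ)^p * (-1:ℂ)^p)
        = (Complex.I * (Complex.I * -1))^p / (2:ℂ)^p := by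
      rw [mul_pow, mul_pow]; ring
    rw [h1]
    simp [Complex.I_mul_I]
  have h2n : ((2:ℂ)^n)⁻¹ * (2:ℂ)^n = 1 := inv_mul_cancel₀ (pow_ne_zero n two_ne_zero)
  set Sc : ℂ := ∑ σ : Equiv.Perm (Fin (2*p)), ((Equiv.Perm.sign σ : ℤ) : ℂ) *
          ∏ j : Fin p, (M.map Complex.ofReal) (a (σ ⟨2*j.val, by have := j.isLt; omega⟩))
            (a (σ ⟨2*j.val+1, by have := j.isLt; omega⟩)) with hSc
  have hLHS : Complex.I ^ p * (((2:ℂ)^n)⁻¹ * ((Complex.I/2)^p * ((p.factorial : ℂ))⁻¹ * Sc)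
        * ((-1:ℂ)^p * 2^n))
      = (Complex.I ^ p * ((Complex.I/2)^p * (-1:ℂ)^p)) * (((2:ℂ)^n)⁻¹ * (2:ℂ)^n)
        * ((p.factorial : ℂ)⁻¹ * Sc) := by ring
  rw [hLHS, hkey, h2n, mul_one, mul_inv]
  ring
end
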